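/- Let S ∈ ℝ and define, for x_1, x_2 > 0 with x_1 ≠ x_2, W02(x_1, x_2) = (1/(2(x_1 − x_2)²))·( (S² + 2(x_1 + x_2))/(√(1 + S²/(4x_1))·√(1 + S²/(4x_2))) − 2(x_1 + x_2) ). Then for every x > 0 the limit lim_{x_2 → x} W02(x, x_2) exists and equals −S²·(S² + 8x)/(4x·(S² + 4x)²); consequently the genus-one one-point function is W11(x) := (1/√(1 + S²/(4x)))·( (1/4)·lim_{x_2 → x} W02(x, x_2) + 1/(16x) ) = 1/(16·x·(1 + S²/(4x))^{5/2}). -/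

import Mathlib

noncomputable section

/-- The genus-zero two-point function of the generalized BGW model. -/
def W02 (S x₁ x₂ : ℝ) : ℝ :=
  (1/(2*(x₁ - x₂)^2)) *
    ((S^2 + 2*(x₁ + x₂)) /
        (Real.sqrt (1 + S^2/(4*x₁)) * Real.sqrt (1 + S^2/(4*x₂)))
      - 2*(x₁ + x₂))

/-! The apparent double pole of `W02` at `x₁ = x₂` cancels after rationalizing: writing
`P = √(1 + S²/(4x₁)) √(1 + S²/(4x₂))`, one has `16 x₁ x₂ P² = (S² + 4x₁)(S² + 4x₂)`, so
`(S² + 2u)² - 4u²P² = -S²(S² + 4u)(x₁ - x₂)²/(4x₁x₂)` with `u = x₁ + x₂`. The resulting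
expression `W02Regular` is continuous on the positive quadrant, and the limit is its value on
the diagonal. The formula for `W11` is then an identity between rational functions and
`(1 + S²/(4x))^{5/2} = (1 + S²/(4x))² √(1 + S²/(4x))`. -/

open Filter Topology

def W02Regular (S x₁ x₂ : ℝ) : ℝ :=
  -S^2*(S^2 + 4*(x₁ + x₂)) /
    (8*x₁*x₂*(Real.sqrt (1 + S^2/(4*x₁)) * Real.sqrt (1 + S^2/(4*x₂))) *
      (S^2 + 2*(x₁ + x₂) +
        2*(x₁ + x₂)*(Real.sqrt (1 + S^2/(4*x₁)) * Real.sqrt (1 + S^2/(4*x₂)))))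

lemma rationalize_two_point {S x y A B : ℝ} (hx : 0 < x) (hy : 0 < y) (hxy : x ≠ y)
    (hA : 0 < A) (hB : 0 < B) (hA2 : A^2 = 1 + S^2/(4*x)) (hB2 : B^2 = 1 + S^2/(4*y)) :
    (1/(2*(x - y)^2)) * ((S^2 + 2*(x + y)) / (A * B) - 2*(x + y))
      = -S^2*(S^2 + 4*(x + y)) / (8*x*y*(A*B)*(S^2 + 2*(x + y) + 2*(x + y)*(A*B))) := by
  have hsub : x - y ≠ 0 := sub_ne_zero.mpr hxy
  have hAB2 : (A*B)^2 * (16*x*y) = (4*x + S^2)*(4*y + S^2) := by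
    rw [mul_pow, hA2, hB2]
    field_simp
    ring
  rw [div_sub' (by positivity), div_mul_div_comm, eq_div_iff (by positivity),
    div_mul_eq_mul_div, div_eq_iff (by positivity)]
  linear_combination (-2*(x + y)^2*(A*B)) * hAB2

lemma W02_eq_W02Regular (S : ℝ) {x y : ℝ} (hx : 0 < x) (hy : 0 < y) (hxy : x ≠ y) :
    W02 S x y = W02Regular S x y := by
  have hX : 0 < 1 + S^2/(4*x) := by positivity
  have hY : 0 < 1 + S^2/(4*y) := by positivity
  exact rationalize_two_point hx hy hxy (Real.sqrt_pos.mpr hX) (Real.sqrt_pos.mpr hY)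
    (Real.sq_sqrt hX.le) (Real.sq_sqrt hY.le)

lemma W02Regular_self (S : ℝ) {x : ℝ} (hx : 0 < x) :
    W02Regular S x x = -S^2*(S^2 + 8*x)/(4*x*(S^2 + 4*x)^2) := by
  have hsq : Real.sqrt (1 + S^2/(4*x)) * Real.sqrt (1 + S^2/(4*x)) = 1 + S^2/(4*x) :=
    Real.mul_self_sqrt (by positivity)
  have h4 : S^2 + 4*x ≠ 0 := by positivity
  rw [W02Regular, hsq]
  field_simp
  ring

lemma continuousAt_W02Regular (S : ℝ) {x y : ℝ} (hx : 0 < x) (hy : 0 < y) :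
    ContinuousAt (W02Regular S x) y := by
  unfold W02Regular
  apply ContinuousAt.div
  · fun_prop
  · fun_prop (disch := positivity)
  · positivity

lemma tendsto_W02_nhdsNE (S : ℝ) {x : ℝ} (hx : 0 < x) :
    Tendsto (W02 S x) (𝓝[≠] x) (𝓝 (-S^2*(S^2 + 8*x)/(4*x*(S^2 + 4*x)^2))) := by
  rw [← W02Regular_self S hx]
  refine (continuousAt_W02Regular S hx hx).continuousWithinAt.tendsto.congr' ?_
  filter_upwards [nhdsWithin_le_nhds (Ioi_mem_nhds hx), self_mem_nhdsWithin] with y hy hyx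
  exact (W02_eq_W02Regular S hx hy (Ne.symm hyx)).symm

lemma rpow_five_halves {a : ℝ} (ha : 0 ≤ a) : a ^ ((5:ℝ)/2) = a^2 * Real.sqrt a := by
  rw [Real.sqrt_eq_rpow, ← Real.rpow_natCast a 2, ← Real.rpow_add' ha (by norm_num)]
  norm_num

lemma W11_closed_form (S : ℝ) {x : ℝ} (hx : 0 < x) :
    (1/Real.sqrt (1 + S^2/(4*x))) *
        ((1/4) * (-S^2*(S^2 + 8*x)/(4*x*(S^2 + 4*x)^2)) + 1/(16*x))
      = 1/(16*x*(1 + S^2/(4*x)) ^ ((5:ℝ)/2)) := by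
  have hX : 0 < 1 + S^2/(4*x) := by positivity
  have h4 : 0 < S^2 + 4*x := by positivity
  have hbracket : (1/4) * (-S^2*(S^2 + 8*x)/(4*x*(S^2 + 4*x)^2)) + 1/(16*x)
      = x/(S^2 + 4*x)^2 := by
    field_simp
    ring
  have hsquare : 16*x^2*(1 + S^2/(4*x))^2 = (S^2 + 4*x)^2 := by
    field_simp
    ring
  rw [hbracket, rpow_five_halves hX.le, div_mul_div_comm,
    div_eq_div_iff (by positivity) (by positivity)]
  linear_combination Real.sqrt (1 + S^2/(4*x)) * hsquare

/-- the limit of `W02(x, x₂)` as `x₂ → x` exists and equals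
`−S²(S²+8x)/(4x(S²+4x)²)`; consequently the genus-one one-point function is
`W11(x) = (1/√(1+S²/(4x)))·((1/4)·lim + 1/(16x)) = 1/(16x(1+S²/(4x))^{5/2})`. -/
theorem genus_one_one_point (S x : ℝ) (hx : 0 < x) :
    Filter.Tendsto (fun y => W02 S x y) (nhdsWithin x {x}ᶜ)
      (nhds (-S^2*(S^2 + 8*x)/(4*x*(S^2 + 4*x)^2))) ∧
    (1/Real.sqrt (1 + S^2/(4*x))) *
        ((1/4) * (-S^2*(S^2 + 8*x)/(4*x*(S^2 + 4*x)^2)) + 1/(16*x))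
      = 1/(16*x*(1 + S^2/(4*x)) ^ ((5:ℝ)/2)) :=
  ⟨tendsto_W02_nhdsNE S hx, W11_closed_form S hx⟩
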